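/- arXiv:math/0312115 — 3 statements merged into one kernel-verified Lean document; each statement's English description precedes it below -/
import Mathlib

section
/- Equivariant Newton–Hensel lemma: let k be a field of characteristic zero containing all l-th roots of unity, let μ_l act on k[[t]][x_1,...,x_d] by ζ·t = ζt, ζ·x_i = ζ^{a_i}x_i (0 ≤ a_i ≤ l-1), and on k[[t]] by ζ·t = ζt. Let Λ be the set of μ_l-equivariant k[[t]]-algebra homomorphisms k[[t]][x_1,...,x_d] → k[[t]]. Let f_1,...,f_r (r ≤ d) be μ_l-invariant, J = det(∂f_i/∂x_j)_{1≤i,j≤r}, and let e > 0 with e' := e + Σ_{j=1}^r a_j divisible by l. If η ∈ Λ satisfies η(J) ≢ 0 mod t^{e+1} and η(f_i) ≡ 0 mod t^{2e'+l} for all i, then there exists θ ∈ Λ with θ(f_i) = 0 for all i and θ(x_i) ≡ η(x_i) mod t^{e+l} for all i. -/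
/-!
Newton's method with the Jacobian minor frozen at the approximate solution `η`. Let `M` be the
minor evaluated at `η`, `c = det M` of order `v ≤ e`, and `w = 2e' + l - v`, so that `v < w` and
`e + l ≤ w`. The step `x ↦ x + adj(M) q` with `c q = -f(x)` moves `x` by a multiple of `t^(w+n)`
and, since `M adj(M) = c`, cancels `f(x)` up to a Taylor remainder divisible by `t^(2w+n)`. The
order of `f(x)` thus grows at every step and the iterates converge `t`-adically to a zero of `f`
congruent to `η` modulo `t^w`.

Equivariance is carried along by weights: `φ` has weight `n` when `φ(ζt) = ζⁿ φ(t)`. An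
equivariant point has coordinates of weights `a_j`; the minor then has column weights `-a_j`, so
`c` has weight `-Σ a_j`, `q` has weight `Σ a_j` and `adj(M) q` has weights `a_j` again, and
weights survive `t`-adic limits.
-/

open MvPolynomial

/-- The action of an `l`-th root of unity `ζ` on `k[[t]][x_1,...,x_d]`:
`t ↦ ζ t` and `x_i ↦ ζ^{a_i} x_i`. -/
noncomputable def muActionHom (k : Type*) [CommRing k] {d : ℕ} (a : Fin d → ℕ) (ζ : k) :
    MvPolynomial (Fin d) (PowerSeries k) →+* MvPolynomial (Fin d) (PowerSeries k) :=
  eval₂Hom ((C : PowerSeries k →+* MvPolynomial (Fin d) (PowerSeries k)).comp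
      (PowerSeries.rescale ζ))
    (fun i => C ((PowerSeries.C ζ) ^ a i) * X i)

/-- `μ_l`-equivariance of a `k[[t]]`-algebra homomorphism `k[[t]][x_1,...,x_d] → k[[t]]`
(the `ζ`-action on `k[[t]]` being `t ↦ ζt`). -/
def IsEquivariantHom {k : Type*} [CommRing k] {d : ℕ} (a : Fin d → ℕ) (ζ : k)
    (γ : MvPolynomial (Fin d) (PowerSeries k) →ₐ[PowerSeries k] PowerSeries k) : Prop :=
  ∀ p, γ (muActionHom k a ζ p) = PowerSeries.rescale ζ (γ p)

open scoped PowerSeries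

namespace PowerSeries

section CommRing

variable {R : Type*} [CommRing R]

theorem exists_forall_X_pow_dvd_sub (s : ℕ → R⟦X⟧) (h : ∀ n, X ^ n ∣ s (n + 1) - s n) :
    ∃ L, ∀ n, X ^ n ∣ L - s n := by
  have stable : ∀ m n, m < n → coeff m (s n) = coeff m (s (m + 1)) := by
    intro m n hmn
    induction n, hmn using Nat.le_induction with
    | base => rfl
    | succ n _ ih =>
      rw [← ih, ← sub_eq_zero, ← map_sub]
      exact X_pow_dvd_iff.mp (h n) m (by omega)
  refine ⟨mk fun m => coeff m (s (m + 1)), fun n => X_pow_dvd_iff.mpr fun m hm => ?_⟩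
  rw [map_sub, coeff_mk, stable m n hm, sub_self]

theorem eq_zero_of_forall_X_pow_dvd {φ : R⟦X⟧} (h : ∀ n, X ^ n ∣ φ) : φ = 0 := by
  ext m
  simpa using X_pow_dvd_iff.mp (h (m + 1)) m (by omega)

theorem X_pow_dvd_rescale {n : ℕ} {φ : R⟦X⟧} (a : R) (h : X ^ n ∣ φ) : X ^ n ∣ rescale a φ := by
  rw [X_pow_dvd_iff] at h ⊢
  intro m hm
  rw [coeff_rescale, h m hm, mul_zero]

theorem X_pow_dvd_iff_le_order {n : ℕ} {φ : R⟦X⟧} : X ^ n ∣ φ ↔ (n : ℕ∞) ≤ φ.order := by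
  rw [order_eq_emultiplicity_X, pow_dvd_iff_le_emultiplicity]

theorem exists_order_eq_of_not_X_pow_dvd {e : ℕ} {φ : R⟦X⟧} (h : ¬ X ^ (e + 1) ∣ φ) :
    ∃ v : ℕ, φ.order = v ∧ v ≤ e := by
  rw [X_pow_dvd_iff_le_order, not_le] at h
  obtain ⟨v, hv⟩ := ENat.ne_top_iff_exists.mp (ne_top_of_lt h)
  rw [← hv] at h
  exact ⟨v, hv.symm, Nat.lt_succ_iff.mp (mod_cast h)⟩

end CommRing

section Field

variable {k : Type*} [Field k]

theorem associated_X_pow_of_order_eq {v : ℕ} {φ : k⟦X⟧} (hφ : φ.order = v) :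
    Associated (X ^ v) φ := by
  have hφ0 : φ ≠ 0 := by rintro rfl; simp at hφ
  refine ⟨(isUnit_divided_by_X_pow_order hφ0).unit, ?_⟩
  simpa [hφ] using (X_pow_order_mul_divXPowOrder (f := φ))

theorem X_pow_dvd_of_X_pow_add_dvd_mul {v m : ℕ} {φ ψ : k⟦X⟧} (hφ : φ.order = v)
    (h : X ^ (v + m) ∣ φ * ψ) : X ^ m ∣ ψ := by
  have hφ0 : φ ≠ 0 := by rintro rfl; simp at hφ
  rw [pow_add, ((associated_X_pow_of_order_eq hφ).mul_right _).dvd_iff_dvd_left] at h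
  exact (mul_dvd_mul_iff_left hφ0).mp h

end Field

section Weight

variable {k : Type*} [Field k]

def weightSpace (ζ : k) (n : ℤ) : AddSubgroup k⟦X⟧ where
  carrier := {φ | rescale ζ φ = C (ζ ^ n) * φ}
  add_mem' {φ ψ} hφ hψ := by simp_all [mul_add]
  zero_mem' := by simp
  neg_mem' {φ} hφ := by simp_all

variable {ζ : k} {m n : ℤ} {φ ψ : k⟦X⟧}

theorem mem_weightSpace : φ ∈ weightSpace ζ n ↔ rescale ζ φ = C (ζ ^ n) * φ := Iff.rfl

theorem one_mem_weightSpace_zero : (1 : k⟦X⟧) ∈ weightSpace ζ 0 := by simp [mem_weightSpace]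

theorem mul_mem_weightSpace (hζ : ζ ≠ 0) (hφ : φ ∈ weightSpace ζ m) (hψ : ψ ∈ weightSpace ζ n) :
    φ * ψ ∈ weightSpace ζ (m + n) := by
  rw [mem_weightSpace] at *
  rw [map_mul, hφ, hψ, zpow_add₀ hζ, map_mul]
  ring

theorem prod_mem_weightSpace {ι : Type*} (hζ : ζ ≠ 0) {s : Finset ι} {β : ι → ℤ} {g : ι → k⟦X⟧}
    (h : ∀ i ∈ s, g i ∈ weightSpace ζ (β i)) : ∏ i ∈ s, g i ∈ weightSpace ζ (∑ i ∈ s, β i) := by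
  classical
  induction s using Finset.induction_on with
  | empty => simpa using one_mem_weightSpace_zero
  | insert i s hi ih =>
    rw [Finset.prod_insert hi, Finset.sum_insert hi]
    exact mul_mem_weightSpace hζ (h i (by simp)) (ih fun j hj => h j (by simp [hj]))

theorem det_mem_weightSpace {ι : Type*} [Fintype ι] [DecidableEq ι] (hζ : ζ ≠ 0)
    {N : Matrix ι ι k⟦X⟧} (β γ : ι → ℤ) (h : ∀ p q, N p q ∈ weightSpace ζ (β p + γ q)) :
    N.det ∈ weightSpace ζ (∑ p, β p + ∑ q, γ q) := by
  rw [Matrix.det_apply]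
  refine AddSubgroup.sum_mem _ fun π _ => ?_
  rw [Units.smul_def]
  refine AddSubgroup.zsmul_mem _ ?_ _
  have hsum : ∑ p, β p + ∑ q, γ q = ∑ q, (β (π q) + γ q) := by
    rw [Finset.sum_add_distrib, Equiv.sum_comp π β]
  rw [hsum]
  exact prod_mem_weightSpace hζ fun q _ => h (π q) q

theorem adjugate_mem_weightSpace {ι : Type*} [Fintype ι] [DecidableEq ι] (hζ : ζ ≠ 0)
    {N : Matrix ι ι k⟦X⟧} (γ : ι → ℤ) (h : ∀ p q, N p q ∈ weightSpace ζ (γ q)) (i j : ι) :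
    N.adjugate i j ∈ weightSpace ζ (∑ q, γ q - γ i) := by
  rw [Matrix.adjugate_apply]
  have := det_mem_weightSpace hζ (N := N.updateRow j (Pi.single i 1))
    (fun p => if p = j then -γ i else 0) γ fun p q => ?_
  · simpa [Finset.sum_ite_eq', add_comm, sub_eq_add_neg] using this
  · rcases eq_or_ne p j with rfl | hp
    · rcases eq_or_ne q i with rfl | hq
      · simpa using one_mem_weightSpace_zero
      · simp [hq]
    · simpa [hp] using h p q

theorem mem_weightSpace_of_mul_mem (hζ : ζ ≠ 0) {c : k⟦X⟧} (hc0 : c ≠ 0)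
    (hc : c ∈ weightSpace ζ m) (h : c * φ ∈ weightSpace ζ n) : φ ∈ weightSpace ζ (n - m) := by
  rw [mem_weightSpace] at *
  rw [map_mul, hc] at h
  have hcancel : C (ζ ^ m) * rescale ζ φ = C (ζ ^ n) * φ := by
    apply mul_left_cancel₀ hc0
    linear_combination h
  rw [zpow_sub₀ hζ, div_eq_mul_inv, map_mul, mul_comm (C _), mul_assoc, ← hcancel, ← mul_assoc,
    ← map_mul, inv_mul_cancel₀ (zpow_ne_zero m hζ), map_one, one_mul]

theorem mem_weightSpace_of_forall_X_pow_dvd_sub {s : ℕ → k⟦X⟧}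
    (hs : ∀ i, s i ∈ weightSpace ζ n) (h : ∀ i, X ^ i ∣ φ - s i) : φ ∈ weightSpace ζ n := by
  rw [mem_weightSpace, ← sub_eq_zero]
  refine eq_zero_of_forall_X_pow_dvd fun i => ?_
  have hdiff : rescale ζ φ - C (ζ ^ n) * φ
      = rescale ζ (φ - s i) - C (ζ ^ n) * (φ - s i) := by
    rw [map_sub, hs i]; ring
  rw [hdiff]
  exact dvd_sub (X_pow_dvd_rescale ζ (h i)) ((h i).mul_left _)

end Weight

end PowerSeries

namespace MvPolynomial

variable {A σ : Type*} [CommRing A]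

theorem dvd_aeval_sub_aeval {g : A} {x y : σ → A} (h : ∀ j, g ∣ y j - x j)
    (p : MvPolynomial σ A) : g ∣ aeval y p - aeval x p := by
  induction p using MvPolynomial.induction_on with
  | C s => simp
  | add p q hp hq => simpa [add_sub_add_comm] using dvd_add hp hq
  | mul_X p j hp =>
    have hsplit : aeval y (p * X j) - aeval x (p * X j)
        = (aeval y p - aeval x p) * y j + aeval x p * (y j - x j) := by
      simp only [aeval_eq_eval, map_mul, eval_X]; ring
    rw [hsplit]
    exact dvd_add (hp.mul_right _) ((h j).mul_left _)

variable [Fintype σ]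

theorem sq_dvd_aeval_add_sub_aeval_sub_sum {g : A} {x δ : σ → A} (h : ∀ j, g ∣ δ j)
    (p : MvPolynomial σ A) :
    g ^ 2 ∣ aeval (x + δ) p - aeval x p - ∑ j, δ j * aeval x (pderiv j p) := by
  classical
  induction p using MvPolynomial.induction_on with
  | C s => simp
  | add p q hp hq =>
    simpa [mul_add, Finset.sum_add_distrib, add_sub_add_comm] using dvd_add hp hq
  | mul_X p i hp =>
    set T := ∑ j, δ j * aeval x (pderiv j p)
    have hT : g ∣ T := Finset.dvd_sum fun j _ => (h j).mul_right _
    have hsum : ∑ j, δ j * aeval x (pderiv j (p * X i)) = T * x i + δ i * aeval x p := by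
      simp only [Derivation.leibniz, pderiv_X, Pi.single_apply, apply_ite, smul_eq_mul, mul_one,
        mul_zero, aeval_eq_eval, map_add, map_zero, map_mul, eval_X, mul_add,
        Finset.sum_add_distrib, Finset.sum_ite_eq, Finset.mem_univ, ↓reduceIte, Finset.sum_mul, mul_assoc, T]
      rw [add_comm]
      exact congrArg (· + _) (Finset.sum_congr rfl fun j _ => by ring)
    have hsplit : aeval (x + δ) (p * X i) - aeval x (p * X i)
          - ∑ j, δ j * aeval x (pderiv j (p * X i))
        = (aeval (x + δ) p - aeval x p - T) * (x i + δ i) + T * δ i := by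
      rw [hsum]
      simp only [aeval_eq_eval, map_mul, eval_X, Pi.add_apply]
      ring
    rw [hsplit]
    exact dvd_add (dvd_mul_of_dvd_left hp _) (sq g ▸ mul_dvd_mul hT (h i))

theorem mul_dvd_aeval_add_sub_aeval_sub_sum {g h : A} {x₀ x δ : σ → A} (hhg : h ∣ g)
    (hδ : ∀ j, g ∣ δ j) (hx : ∀ j, h ∣ x j - x₀ j) (p : MvPolynomial σ A) :
    g * h ∣ aeval (x + δ) p - aeval x p - ∑ j, δ j * aeval x₀ (pderiv j p) := by
  have hsplit : aeval (x + δ) p - aeval x p - ∑ j, δ j * aeval x₀ (pderiv j p)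
      = (aeval (x + δ) p - aeval x p - ∑ j, δ j * aeval x (pderiv j p))
        + ∑ j, δ j * (aeval x (pderiv j p) - aeval x₀ (pderiv j p)) := by
    simp only [mul_sub, Finset.sum_sub_distrib]; ring
  rw [hsplit]
  refine dvd_add ((mul_dvd_mul_left g hhg).trans (sq g ▸ sq_dvd_aeval_add_sub_aeval_sub_sum hδ p))
    (Finset.dvd_sum fun j _ => mul_dvd_mul (hδ j) (dvd_aeval_sub_aeval hx _))

end MvPolynomial

theorem exists_seq_of_forall_exists_succ {α : Type*} (P : ℕ → α → Prop) (Q : ℕ → α → α → Prop)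
    {a : α} (h₀ : P 0 a) (h : ∀ n x, P n x → ∃ y, P (n + 1) y ∧ Q n x y) :
    ∃ s : ℕ → α, ∀ n, P n (s n) ∧ Q n (s n) (s (n + 1)) := by
  choose next hnext using h
  let s : (n : ℕ) → {x // P n x} :=
    fun n => Nat.rec ⟨a, h₀⟩ (fun n x => ⟨next n x.1 x.2, (hnext n x.1 x.2).1⟩) n
  exact ⟨fun n => (s n).1, fun n => ⟨(s n).2, (hnext n _ (s n).2).2⟩⟩

section Newton

open Matrix

variable {A ι σ : Type*} [CommRing A] [Fintype ι] [DecidableEq ι]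

noncomputable def jacobianMinor (f : ι → MvPolynomial σ A) (col : ι → σ) (x : σ → A) :
    Matrix ι ι A :=
  Matrix.of fun i j => aeval x (pderiv (col j) (f i))

noncomputable def newtonDirection (f : ι → MvPolynomial σ A) (col : ι → σ) (x₀ : σ → A)
    (q : ι → A) : σ → A :=
  Function.extend col ((jacobianMinor f col x₀).adjugate *ᵥ q) 0

variable (f : ι → MvPolynomial σ A) (col : ι → σ) (x₀ : σ → A)

theorem sum_newtonDirection_mul_aeval_pderiv [Fintype σ] (hcol : Function.Injective col)
    (q : ι → A) (i : ι) :
    ∑ j, newtonDirection f col x₀ q j * aeval x₀ (pderiv j (f i))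
      = (jacobianMinor f col x₀).det * q i := by
  set M := jacobianMinor f col x₀
  rw [← Fintype.sum_of_injective col hcol (fun i' => (M.adjugate *ᵥ q) i' * M i i') _
    (fun j hj => by simp [newtonDirection, Function.extend_apply' _ _ _ (by simpa using hj)])
    (fun i' => by simp [newtonDirection, hcol.extend_apply, M, jacobianMinor])]
  calc ∑ i', (M.adjugate *ᵥ q) i' * M i i' = (M *ᵥ (M.adjugate *ᵥ q)) i := by
        simp [Matrix.mulVec, dotProduct, mul_comm]
    _ = M.det * q i := by
        rw [Matrix.mulVec_mulVec, Matrix.mul_adjugate, Matrix.smul_mulVec, Matrix.one_mulVec]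
        rfl

theorem dvd_newtonDirection {g : A} {q : ι → A} (h : ∀ i, g ∣ q i) (j : σ) :
    g ∣ newtonDirection f col x₀ q j := by
  classical
  rw [newtonDirection, Function.extend_def]
  split_ifs
  · exact Finset.dvd_sum fun i _ => (h i).mul_left _
  · exact dvd_zero g

end Newton

section PowerSeriesNewton

variable {k ι σ : Type*} [Field k] [Fintype ι] [DecidableEq ι] [Fintype σ]
  (f : ι → MvPolynomial σ k⟦X⟧) {col : ι → σ} {x₀ : σ → k⟦X⟧} {v w : ℕ}

theorem exists_newton_step (hcol : Function.Injective col)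
    (hv : (jacobianMinor f col x₀).det.order = v) (hvw : v < w) {n : ℕ} {x : σ → k⟦X⟧}
    (hx : ∀ j, PowerSeries.X ^ w ∣ x j - x₀ j)
    (hfx : ∀ i, PowerSeries.X ^ (v + w + n) ∣ aeval x (f i)) :
    ∃ q : ι → k⟦X⟧, (∀ i, (jacobianMinor f col x₀).det * q i = -aeval x (f i)) ∧
      (∀ j, PowerSeries.X ^ (w + n) ∣ newtonDirection f col x₀ q j) ∧
      ∀ i, PowerSeries.X ^ (v + w + (n + 1)) ∣ aeval (x + newtonDirection f col x₀ q) (f i) := by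
  set c := (jacobianMinor f col x₀).det
  have hc_dvd : ∀ i, c ∣ -aeval x (f i) := fun i =>
    (PowerSeries.associated_X_pow_of_order_eq hv).dvd_iff_dvd_left.mp
      ((pow_dvd_pow _ (by omega)).trans (hfx i).neg_right)
  choose q hq using hc_dvd
  have hq_dvd : ∀ i, PowerSeries.X ^ (w + n) ∣ q i := fun i =>
    PowerSeries.X_pow_dvd_of_X_pow_add_dvd_mul hv (by
      rw [← hq i, ← add_assoc]; exact (hfx i).neg_right)
  refine ⟨q, fun i => (hq i).symm, dvd_newtonDirection f col x₀ hq_dvd, fun i => ?_⟩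
  have hlinear :
      aeval x (f i) + ∑ j, newtonDirection f col x₀ q j * aeval x₀ (pderiv j (f i)) = 0 := by
    rw [sum_newtonDirection_mul_aeval_pderiv f col x₀ hcol, ← hq i, add_neg_cancel]
  have htaylor := mul_dvd_aeval_add_sub_aeval_sub_sum (pow_dvd_pow _ (by omega : w ≤ w + n))
    (dvd_newtonDirection f col x₀ hq_dvd) hx (f i)
  rw [← pow_add, sub_sub, hlinear, sub_zero] at htaylor
  exact (pow_dvd_pow _ (by omega)).trans htaylor

/-- `P` is any property of points that Newton steps and `X`-adic limits preserve; the zero found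
satisfies it. -/
theorem exists_aeval_eq_zero_of_X_pow_dvd (P : (σ → k⟦X⟧) → Prop)
    (hcol : Function.Injective col)
    (hv : (jacobianMinor f col x₀).det.order = v) (hvw : v < w)
    (hf : ∀ i, PowerSeries.X ^ (v + w) ∣ aeval x₀ (f i)) (hP₀ : P x₀)
    (hP_step : ∀ x q, P x → (∀ i, (jacobianMinor f col x₀).det * q i = -aeval x (f i)) →
      P (x + newtonDirection f col x₀ q))
    (hP_lim : ∀ (s : ℕ → σ → k⟦X⟧) L, (∀ n, P (s n)) →
      (∀ n j, PowerSeries.X ^ n ∣ L j - s n j) → P L) :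
    ∃ x, P x ∧ (∀ j, PowerSeries.X ^ w ∣ x j - x₀ j) ∧ ∀ i, aeval x (f i) = 0 := by
  obtain ⟨s, hs⟩ := exists_seq_of_forall_exists_succ
    (fun n x => P x ∧ (∀ j, PowerSeries.X ^ w ∣ x j - x₀ j) ∧
      ∀ i, PowerSeries.X ^ (v + w + n) ∣ aeval x (f i))
    (fun n x y => ∀ j, PowerSeries.X ^ (w + n) ∣ y j - x j)
    ⟨hP₀, by simp, hf⟩ fun n x ⟨hPx, hx, hfx⟩ => by
      obtain ⟨q, hq, hq_dvd, hfq⟩ := exists_newton_step f hcol hv hvw hx hfx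
      refine ⟨x + newtonDirection f col x₀ q, ⟨hP_step x q hPx hq, fun j => ?_, hfq⟩,
        fun j => by simpa using hq_dvd j⟩
      rw [Pi.add_apply, add_sub_right_comm]
      exact dvd_add (hx j) ((pow_dvd_pow _ (by omega)).trans (hq_dvd j))
  choose L hL using fun j => PowerSeries.exists_forall_X_pow_dvd_sub (fun n => s n j)
    fun n => (pow_dvd_pow _ (by omega)).trans ((hs n).2 j)
  refine ⟨L, hP_lim s L (fun n => (hs n).1.1) (fun n j => hL j n), fun j => ?_, fun i => ?_⟩
  · simpa using dvd_add (hL j w) ((hs w).1.2.1 j)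
  · refine PowerSeries.eq_zero_of_forall_X_pow_dvd fun n => ?_
    simpa using dvd_add (dvd_aeval_sub_aeval (fun j => hL j n) (f i))
      ((pow_dvd_pow _ (by omega)).trans ((hs n).1.2.2 i))

end PowerSeriesNewton

section Action

open PowerSeries (weightSpace mem_weightSpace)

variable {k : Type*} [Field k] {d : ℕ} {a : Fin d → ℕ} {ζ : k}

@[simp]
theorem muActionHom_C (s : k⟦X⟧) : muActionHom k a ζ (C s) = C (PowerSeries.rescale ζ s) := by
  simp [muActionHom]

@[simp]
theorem muActionHom_X (i : Fin d) :
    muActionHom k a ζ (X i) = C (PowerSeries.C ζ ^ a i) * X i := by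
  simp [muActionHom]

theorem pderiv_muActionHom (j : Fin d) (p : MvPolynomial (Fin d) k⟦X⟧) :
    pderiv j (muActionHom k a ζ p) =
      C (PowerSeries.C ζ ^ a j) * muActionHom k a ζ (pderiv j p) := by
  induction p using MvPolynomial.induction_on with
  | C s => simp
  | add p q hp hq => simp only [map_add, hp, hq, mul_add]
  | mul_X p i hp =>
    rcases eq_or_ne i j with rfl | hij
    · simp only [map_mul, muActionHom_X, C_pow, Derivation.leibniz, pderiv_X, Pi.single_eq_same,
        smul_eq_mul, mul_one, Derivation.leibniz_pow, derivation_C, mul_zero, nsmul_zero, add_zero,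
        hp, map_add]
      ring
    · simp only [map_mul, muActionHom_X, C_pow, Derivation.leibniz, pderiv_X_of_ne hij,
        smul_eq_mul, mul_zero, Derivation.leibniz_pow, derivation_C, nsmul_zero, add_zero, hp,
        zero_add]
      ring

theorem isEquivariantHom_aeval {x : Fin d → k⟦X⟧} (hx : ∀ j, x j ∈ weightSpace ζ (a j)) :
    IsEquivariantHom a ζ (aeval x) := by
  intro p
  induction p using MvPolynomial.induction_on with
  | C s => simp
  | add p q hp hq => simp only [map_add, hp, hq]
  | mul_X p i hp =>
    have hxi := (mem_weightSpace.mp (hx i)).symm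
    simp only [map_mul, muActionHom_X, aeval_C, aeval_X, hp, Algebra.algebraMap_self,
      RingHom.id_apply, zpow_natCast, map_pow] at hxi ⊢
    rw [hxi]

theorem IsEquivariantHom.apply_X_mem_weightSpace
    {γ : MvPolynomial (Fin d) k⟦X⟧ →ₐ[k⟦X⟧] k⟦X⟧} (hγ : IsEquivariantHom a ζ γ) (j : Fin d) :
    γ (X j) ∈ weightSpace ζ (a j) := by
  rw [mem_weightSpace, ← hγ, muActionHom_X, map_mul, ← algebraMap_eq, AlgHom.commutes]
  simp

theorem aeval_mem_weightSpace_zero {x : Fin d → k⟦X⟧} (hx : ∀ j, x j ∈ weightSpace ζ (a j))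
    {p : MvPolynomial (Fin d) k⟦X⟧} (hp : muActionHom k a ζ p = p) :
    aeval x p ∈ weightSpace ζ 0 := by
  rw [mem_weightSpace, ← isEquivariantHom_aeval hx, hp]
  simp

theorem aeval_pderiv_mem_weightSpace (hζ : ζ ≠ 0) {x : Fin d → k⟦X⟧}
    (hx : ∀ j, x j ∈ weightSpace ζ (a j)) {p : MvPolynomial (Fin d) k⟦X⟧}
    (hp : muActionHom k a ζ p = p) (j : Fin d) :
    aeval x (pderiv j p) ∈ weightSpace ζ (-(a j)) := by
  have h := congrArg (aeval x) (pderiv_muActionHom (a := a) (ζ := ζ) j p)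
  rw [hp, map_mul, aeval_C, isEquivariantHom_aeval hx] at h
  rw [mem_weightSpace]
  conv_rhs => rw [h]
  rw [Algebra.algebraMap_self, RingHom.id_apply, ← mul_assoc, ← map_pow, ← map_mul, zpow_neg,
    zpow_natCast, inv_mul_cancel₀ (pow_ne_zero _ hζ), map_one, one_mul]

theorem add_newtonDirection_mem_weightSpace (hζ : ζ ≠ 0) {ι : Type*} [Fintype ι] [DecidableEq ι]
    {f : ι → MvPolynomial (Fin d) k⟦X⟧} (hf : ∀ i, muActionHom k a ζ (f i) = f i)
    {col : ι → Fin d} (hcol : Function.Injective col) {x₀ x : Fin d → k⟦X⟧} {q : ι → k⟦X⟧}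
    (hx₀ : ∀ j, x₀ j ∈ weightSpace ζ (a j)) (hx : ∀ j, x j ∈ weightSpace ζ (a j))
    (hc0 : (jacobianMinor f col x₀).det ≠ 0)
    (hq : ∀ i, (jacobianMinor f col x₀).det * q i = -aeval x (f i)) (j : Fin d) :
    (x + newtonDirection f col x₀ q) j ∈ weightSpace ζ (a j) := by
  set M := jacobianMinor f col x₀
  set γ : ι → ℤ := fun i => -(a (col i))
  have hM : ∀ p i, M p i ∈ weightSpace ζ (γ i) :=
    fun p i => aeval_pderiv_mem_weightSpace hζ hx₀ (hf p) (col i)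
  have hc : M.det ∈ weightSpace ζ (∑ i, γ i) := by
    have := PowerSeries.det_mem_weightSpace hζ (fun _ => 0) γ fun p i => by
      rw [zero_add]; exact hM p i
    rwa [Finset.sum_const_zero, zero_add] at this
  have hq' : ∀ i, q i ∈ weightSpace ζ (-∑ i, γ i) := fun i => by
    have hcq : M.det * q i ∈ weightSpace ζ 0 := by
      rw [hq i]; exact neg_mem (aeval_mem_weightSpace_zero hx (hf i))
    have := PowerSeries.mem_weightSpace_of_mul_mem hζ hc0 hc hcq
    rwa [zero_sub] at this
  refine add_mem (hx j) ?_
  rcases em (∃ i, col i = j) with ⟨i, rfl⟩ | hj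
  · rw [newtonDirection, hcol.extend_apply]
    refine AddSubgroup.sum_mem _ fun p _ => ?_
    convert PowerSeries.mul_mem_weightSpace hζ
      (PowerSeries.adjugate_mem_weightSpace hζ γ hM i p) (hq' p) using 2
    simp [γ]
  · rw [newtonDirection, Function.extend_apply' _ _ _ (by simpa using hj)]
    exact zero_mem _

end Action

theorem equivariant_newton_hensel_general
    (k : Type*) [Field k]
    (l d r : ℕ) (hl : 0 < l) (hr : r ≤ d)
    (ζ : k) (hζ : IsPrimitiveRoot ζ l)
    (a : Fin d → ℕ)
    (f : Fin r → MvPolynomial (Fin d) (PowerSeries k))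
    (hinv : ∀ i, muActionHom k a ζ (f i) = f i)
    (e : ℕ)
    (η : MvPolynomial (Fin d) (PowerSeries k) →ₐ[PowerSeries k] PowerSeries k)
    (hη : IsEquivariantHom a ζ η)
    (hJ : ¬ (PowerSeries.X : PowerSeries k) ^ (e + 1) ∣
        η (Matrix.det (Matrix.of fun i j : Fin r => pderiv (Fin.castLE hr j) (f i))))
    (hf : ∀ i : Fin r,
      (PowerSeries.X : PowerSeries k) ^ (2 * (e + ∑ j : Fin r, a (Fin.castLE hr j)) + l) ∣
        η (f i)) :
    ∃ θ : MvPolynomial (Fin d) (PowerSeries k) →ₐ[PowerSeries k] PowerSeries k,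
      IsEquivariantHom a ζ θ ∧ (∀ i, θ (f i) = 0) ∧
      ∀ i : Fin d,
        (PowerSeries.X : PowerSeries k) ^ (e + l) ∣ (θ (X i) - η (X i)) := by
  have hζ0 : ζ ≠ 0 := hζ.ne_zero hl.ne'
  set x₀ : Fin d → k⟦X⟧ := fun j => η (X j)
  have hηx₀ : η = aeval x₀ := aeval_unique η
  have hc : η (Matrix.det (Matrix.of fun i j : Fin r => pderiv (Fin.castLE hr j) (f i)))
      = (jacobianMinor f (Fin.castLE hr) x₀).det := by
    rw [AlgHom.map_det, hηx₀]
    rfl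
  obtain ⟨v, hv, hve⟩ := PowerSeries.exists_order_eq_of_not_X_pow_dvd (hc ▸ hJ)
  have hc0 : (jacobianMinor f (Fin.castLE hr) x₀).det ≠ 0 := by
    rintro h
    simp [h] at hv
  obtain ⟨x, hx, hxx₀, hfx⟩ := exists_aeval_eq_zero_of_X_pow_dvd f
    (P := fun x => ∀ j, x j ∈ PowerSeries.weightSpace ζ (a j))
    (w := 2 * (e + ∑ j : Fin r, a (Fin.castLE hr j)) + l - v) (Fin.castLE_injective hr) hv
    (by omega) (fun i => by rw [← hηx₀, Nat.add_sub_cancel' (by omega)]; exact hf i)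
    hη.apply_X_mem_weightSpace
    (fun _ _ hx hq => add_newtonDirection_mem_weightSpace hζ0 hinv (Fin.castLE_injective hr)
      hη.apply_X_mem_weightSpace hx hc0 hq)
    (fun _ _ hs hL j => PowerSeries.mem_weightSpace_of_forall_X_pow_dvd_sub (fun n => hs n j)
      (fun n => hL n j))
  refine ⟨aeval x, isEquivariantHom_aeval hx, hfx, fun i => ?_⟩
  rw [hηx₀, aeval_X, aeval_X]
  exact (pow_dvd_pow _ (by omega)).trans (hxx₀ i)

/-- Equivariant Newton–Hensel lemma: let `k` be a field of characteristic zero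
containing a primitive `l`-th root of unity `ζ`, let `μ_l` act on `k[[t]][x_1,...,x_d]` by
`ζ·t = ζt`, `ζ·x_i = ζ^{a_i} x_i` (`0 ≤ a_i ≤ l-1`) and on `k[[t]]` by `ζ·t = ζt`.
Let `f_1,...,f_r` (`r ≤ d`) be `μ_l`-invariant, `J = det(∂f_i/∂x_j)_{1≤i,j≤r}`, and `e > 0`
with `e' := e + Σ_{j=1}^r a_j` divisible by `l`.  If a `μ_l`-equivariant `k[[t]]`-algebra
homomorphism `η` satisfies `η(J) ≢ 0 mod t^{e+1}` and `η(f_i) ≡ 0 mod t^{2e'+l}` for all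
`i`, then there is a `μ_l`-equivariant `θ` with `θ(f_i) = 0` and
`θ(x_i) ≡ η(x_i) mod t^{e+l}` for all `i`. -/
theorem equivariant_newton_hensel
    (k : Type*) [Field k] [CharZero k]
    (l d r : ℕ) (hl : 0 < l) (hr : r ≤ d)
    (ζ : k) (hζ : IsPrimitiveRoot ζ l)
    (a : Fin d → ℕ) (ha : ∀ i, a i ≤ l - 1)
    (f : Fin r → MvPolynomial (Fin d) (PowerSeries k))
    (hinv : ∀ i, muActionHom k a ζ (f i) = f i)
    (e : ℕ) (he : 0 < e)
    (hdvd : l ∣ (e + ∑ j : Fin r, a (Fin.castLE hr j)))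
    (η : MvPolynomial (Fin d) (PowerSeries k) →ₐ[PowerSeries k] PowerSeries k)
    (hη : IsEquivariantHom a ζ η)
    (hJ : ¬ (PowerSeries.X : PowerSeries k) ^ (e + 1) ∣
        η (Matrix.det (Matrix.of fun i j : Fin r => pderiv (Fin.castLE hr j) (f i))))
    (hf : ∀ i : Fin r,
      (PowerSeries.X : PowerSeries k) ^ (2 * (e + ∑ j : Fin r, a (Fin.castLE hr j)) + l) ∣
        η (f i)) :
    ∃ θ : MvPolynomial (Fin d) (PowerSeries k) →ₐ[PowerSeries k] PowerSeries k,
      IsEquivariantHom a ζ θ ∧ (∀ i, θ (f i) = 0) ∧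
      ∀ i : Fin d,
        (PowerSeries.X : PowerSeries k) ^ (e + l) ∣ (θ (X i) - η (X i)) :=
  equivariant_newton_hensel_general k l d r hl hr ζ hζ a f hinv e η hη hJ hf
end

section
/- Let M be the d-dimensional formal affine space over a field K, with a diagonal μ_l-action ζ·x_i = ζ^{a_i}x_i (1 ≤ a_i ≤ l). Then the set of μ_l-equivariant K-algebra homomorphisms K[[x_1,...,x_d]] → K[[t]]/t^{nl+1} (where ζ·t = ζt) consists exactly of those sending each x_i to an element of the form c_0 t^{a_i} + c_1 t^{l+a_i} + ... + c_{n-1} t^{(n-1)l+a_i} with c_j ∈ K; in particular this set is in bijection with K^{nd}, and the truncation map to K[[t]]/t^{(n-1)l+1}-jets has all fibers isomorphic to K^d. -/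
/-- Underlying function of the action of `ζ` on `K[[x_1,...,x_d]]` by `x_i ↦ ζ^{a_i} x_i`. -/
noncomputable def srcFun (K : Type*) [CommRing K] {d : ℕ} (a : Fin d → ℕ) (ζ : K)
    (f : MvPowerSeries (Fin d) K) : MvPowerSeries (Fin d) K :=
  fun B => ζ ^ (∑ i, a i * B i) * MvPowerSeries.coeff B f

theorem coeff_srcFun (K : Type*) [CommRing K] {d : ℕ} (a : Fin d → ℕ) (ζ : K)
    (f : MvPowerSeries (Fin d) K) (B : Fin d →₀ ℕ) :
    MvPowerSeries.coeff B (srcFun K a ζ f)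
      = ζ ^ (∑ i, a i * B i) * MvPowerSeries.coeff B f := rfl

/-- The action of a root of unity `ζ` on `K[[x_1,...,x_d]]` by `x_i ↦ ζ^{a_i} x_i`, as a
ring homomorphism. -/
noncomputable def srcAct (K : Type*) [CommRing K] {d : ℕ} (a : Fin d → ℕ) (ζ : K) :
    MvPowerSeries (Fin d) K →+* MvPowerSeries (Fin d) K where
  toFun := srcFun K a ζ
  map_zero' := by
    apply MvPowerSeries.ext
    intro B
    rw [coeff_srcFun]
    simp
  map_one' := by
    apply MvPowerSeries.ext
    intro B
    rw [coeff_srcFun]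
    by_cases hB : B = 0
    · subst hB; simp
    · simp [MvPowerSeries.coeff_one, hB]
  map_add' := by
    intro f g
    apply MvPowerSeries.ext
    intro B
    rw [map_add, coeff_srcFun, map_add, coeff_srcFun, coeff_srcFun]
    ring
  map_mul' := by
    intro f g
    apply MvPowerSeries.ext
    intro B
    rw [coeff_srcFun, MvPowerSeries.coeff_mul, MvPowerSeries.coeff_mul, Finset.mul_sum]
    refine Finset.sum_congr rfl fun p hp => ?_
    have hB : p.1 + p.2 = B := Finset.HasAntidiagonal.mem_antidiagonal.mp hp
    rw [coeff_srcFun, coeff_srcFun]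
    have hw : (∑ i, a i * B i) = (∑ i, a i * p.1 i) + (∑ i, a i * p.2 i) := by
      rw [← hB]
      simp [Finsupp.add_apply, mul_add, Finset.sum_add_distrib]
    rw [hw, pow_add]
    ring

/-- The ideal `(t^m) ⊂ K[[t]]`. -/
noncomputable def jetIdeal (K : Type*) [CommRing K] (m : ℕ) : Ideal (PowerSeries K) :=
  Ideal.span {(PowerSeries.X : PowerSeries K) ^ m}

/-- The truncated power series ring `K[[t]]/(t^m)`. -/
abbrev JetRing (K : Type*) [CommRing K] (m : ℕ) : Type _ :=
  PowerSeries K ⧸ jetIdeal K m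

/-- The action `t ↦ ζ t` on `K[[t]]/(t^m)`. -/
noncomputable def tgtAct (K : Type*) [CommRing K] (m : ℕ) (ζ : K) :
    JetRing K m →+* JetRing K m :=
  Ideal.Quotient.lift (jetIdeal K m)
    ((Ideal.Quotient.mk (jetIdeal K m)).comp (PowerSeries.rescale ζ))
    (by
      intro y hy
      rw [RingHom.comp_apply, Ideal.Quotient.eq_zero_iff_mem, jetIdeal,
        Ideal.mem_span_singleton] at *
      rw [PowerSeries.X_pow_dvd_iff] at *
      intro j hj
      rw [PowerSeries.coeff_rescale, hy j hj, mul_zero])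

/-- The truncation `K[[t]]/(t^{(n+1)l+1}) → K[[t]]/(t^{nl+1})`. -/
noncomputable def jetTrunc (K : Type*) [CommRing K] (l n : ℕ) :
    JetRing K ((n + 1) * l + 1) →+* JetRing K (n * l + 1) :=
  Ideal.Quotient.factor (S := jetIdeal K ((n + 1) * l + 1)) (T := jetIdeal K (n * l + 1))
    (by
      rw [jetIdeal, jetIdeal, Ideal.span_le, Set.singleton_subset_iff, SetLike.mem_coe,
        Ideal.mem_span_singleton]
      refine pow_dvd_pow _ ?_
      have : n * l ≤ (n + 1) * l := Nat.mul_le_mul_right l (by omega)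
      omega)

/-- `μ_l`-equivariance of a `K`-algebra homomorphism `K[[x_1,...,x_d]] → K[t]/(t^m)`,
with respect to the actions `ζ·x_i = ζ^{a_i} x_i` and `ζ·t = ζ t`. -/
def EquivJetHom (K : Type*) [CommRing K] {d : ℕ} (a : Fin d → ℕ) (ζ : K) (m : ℕ)
    (γ : MvPowerSeries (Fin d) K →ₐ[K] JetRing K m) : Prop :=
  ∀ f, γ (srcAct K a ζ f) = tgtAct K m ζ (γ f)

/-!
An algebra map `γ : K[[x₁,…,x_d]] → K[t]/(t^m)` sends each `xᵢ` to a jet without constant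
term, hence to a nilpotent; since `f` minus a truncation of `f` lies in the ideal generated by
the `xᵢ^N`, such a `γ` is determined by the `γ(xᵢ)`, and conversely any choice of jets without
constant term is realised by substitution. Equivariance then says exactly that `γ(xᵢ)` has
weight `ζ^{aᵢ}` under `t ↦ ζt`, i.e. only involves the monomials `t^k` with `0 < k ≤ nl` and
`k ≡ aᵢ (mod l)`, which are the `t^{jl+aᵢ}` with `j < n`. Truncating from level `n + 1` to
level `n` forgets exactly the top coefficients.
-/

namespace MvPowerSeries

variable {σ R : Type*} [CommRing R]

theorem mem_span_X_pow_of_coeff_eq_zero (N : ℕ) (s : Finset σ) {g : MvPowerSeries σ R}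
    (hg : ∀ B : σ →₀ ℕ, (∀ i ∈ s, B i < N) → coeff B g = 0) :
    g ∈ Ideal.span (Set.range fun i => (X i : MvPowerSeries σ R) ^ N) := by
  classical
  induction s using Finset.induction_on generalizing g with
  | empty =>
    have : g = 0 := ext fun B => by simpa using hg B (by simp)
    simp [this]
  | insert j s _ ih =>
    let g₁ : MvPowerSeries σ R := fun B => if N ≤ B j then coeff B g else 0
    have hg₁ : X j ^ N ∣ g₁ := X_pow_dvd_iff.mpr fun B hB => if_neg (by omega)
    have hrest : ∀ B : σ →₀ ℕ, (∀ i ∈ s, B i < N) → coeff B (g - g₁) = 0 := by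
      intro B hB
      by_cases hBj : N ≤ B j
      · exact sub_eq_zero.mpr (if_pos hBj).symm
      · rw [map_sub, hg B (Finset.forall_mem_insert _ _ _ |>.mpr ⟨by omega, hB⟩)]
        exact sub_eq_zero.mpr (if_neg hBj).symm
    rw [← add_sub_cancel g₁ g]
    exact add_mem (Ideal.mem_of_dvd _ hg₁ (Ideal.subset_span ⟨j, rfl⟩)) (ih hrest)

theorem algHom_ext_of_isNilpotent [Finite σ] {A : Type*} [CommRing A] [Algebra R A]
    {γ₁ γ₂ : MvPowerSeries σ R →ₐ[R] A} (hnil : ∀ i, IsNilpotent (γ₁ (X i)))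
    (h : ∀ i, γ₁ (X i) = γ₂ (X i)) : γ₁ = γ₂ := by
  classical
  have := Fintype.ofFinite σ
  choose e he using hnil
  set N := ∑ i, e i
  have hN : ∀ i, γ₁ (X i) ^ (N + 1) = 0 := fun i =>
    pow_eq_zero_of_le ((Finset.single_le_sum (fun _ _ => Nat.zero_le _) (Finset.mem_univ i)).trans
      N.le_succ) (he i)
  have hker : ∀ γ : MvPowerSeries σ R →ₐ[R] A, (∀ i, γ (X i) ^ (N + 1) = 0) →
      Ideal.span (Set.range fun i => (X i : MvPowerSeries σ R) ^ (N + 1)) ≤ RingHom.ker γ :=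
    fun γ hγ => Ideal.span_le.mpr <| by
      rintro _ ⟨i, rfl⟩
      simp [RingHom.mem_ker, hγ i]
  have hpoly : γ₁.comp (MvPolynomial.coeToMvPowerSeries.algHom R) =
      γ₂.comp (MvPolynomial.coeToMvPowerSeries.algHom R) :=
    MvPolynomial.algHom_ext fun i => by simpa using h i
  ext f
  let p := trunc' R (Finsupp.equivFunOnFinite.symm fun _ => N) f
  have htail : f - p ∈ Ideal.span (Set.range fun i => (X i : MvPowerSeries σ R) ^ (N + 1)) := by
    refine mem_span_X_pow_of_coeff_eq_zero (N + 1) Finset.univ fun B hB => ?_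
    have : B ≤ Finsupp.equivFunOnFinite.symm fun _ => N := fun i => by
      simpa [Nat.lt_succ_iff] using hB i (Finset.mem_univ i)
    rw [map_sub, MvPolynomial.coeff_coe, coeff_trunc', if_pos this, sub_self]
  have h₁ := hker γ₁ hN htail
  have h₂ := hker γ₂ (fun i => h i ▸ hN i) htail
  rw [RingHom.mem_ker, map_sub, sub_eq_zero] at h₁ h₂
  rw [h₁, h₂]
  exact congr($hpoly p)

end MvPowerSeries

open MvPowerSeries (X)

section Jets

variable {K : Type*}

theorem jetIdeal_mk_eq_mk_iff [CommRing K] {m : ℕ} {f g : PowerSeries K} :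
    Ideal.Quotient.mk (jetIdeal K m) f = Ideal.Quotient.mk (jetIdeal K m) g ↔
      ∀ k < m, PowerSeries.coeff k f = PowerSeries.coeff k g := by
  rw [Ideal.Quotient.eq, jetIdeal, Ideal.mem_span_singleton, PowerSeries.X_pow_dvd_iff]
  simp only [map_sub, sub_eq_zero]

theorem isNilpotent_mk_of_constantCoeff_eq_zero [CommRing K] {m : ℕ} {f : PowerSeries K}
    (hf : PowerSeries.constantCoeff f = 0) : IsNilpotent (Ideal.Quotient.mk (jetIdeal K m) f) := by
  obtain ⟨g, rfl⟩ := PowerSeries.X_dvd_iff.mpr hf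
  refine ⟨m, ?_⟩
  rw [← map_pow, Ideal.Quotient.eq_zero_iff_mem, mul_pow, jetIdeal]
  exact Ideal.mul_mem_right _ _ (Ideal.subset_span rfl)

theorem jetIdeal_ne_top [CommRing K] [Nontrivial K] {m : ℕ} (hm : 0 < m) : jetIdeal K m ≠ ⊤ := by
  rw [Ne, Ideal.eq_top_iff_one, jetIdeal, Ideal.mem_span_singleton, PowerSeries.X_pow_dvd_iff]
  exact fun h => by simpa using h 0 hm

variable [Field K] {σ : Type*} {m : ℕ}

/-- If `γ (X i)` had a nonzero constant term `c`, it would map the unit `X i - c` to a nilpotent. -/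
theorem constantCoeff_eq_zero_of_mk_eq_algHom_X (hm : 0 < m)
    (γ : MvPowerSeries σ K →ₐ[K] JetRing K m) (i : σ) {f : PowerSeries K}
    (hf : Ideal.Quotient.mk (jetIdeal K m) f = γ (X i)) : PowerSeries.constantCoeff f = 0 := by
  by_contra hc
  set c := PowerSeries.constantCoeff f
  have hunit : IsUnit (γ (X i - MvPowerSeries.C c)) := by
    refine IsUnit.map γ (MvPowerSeries.isUnit_iff_constantCoeff.mpr ?_)
    simpa using hc
  have hnil : IsNilpotent (γ (X i - MvPowerSeries.C c)) := by
    rw [map_sub, ← hf, MvPowerSeries.c_eq_algebraMap, AlgHom.commutes,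
      ← Ideal.Quotient.mk_algebraMap, ← map_sub]
    exact isNilpotent_mk_of_constantCoeff_eq_zero (by simp [c])
  have := Ideal.Quotient.nontrivial_iff.mpr (jetIdeal_ne_top (K := K) hm)
  exact hnil.not_isUnit hunit

theorem isNilpotent_algHom_X (hm : 0 < m) (γ : MvPowerSeries σ K →ₐ[K] JetRing K m) (i : σ) :
    IsNilpotent (γ (X i)) := by
  obtain ⟨f, hf⟩ := Ideal.Quotient.mk_surjective (γ (X i))
  exact hf ▸ isNilpotent_mk_of_constantCoeff_eq_zero
    (constantCoeff_eq_zero_of_mk_eq_algHom_X hm γ i hf)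

theorem jetRing_algHom_ext [Finite σ] (hm : 0 < m) {γ₁ γ₂ : MvPowerSeries σ K →ₐ[K] JetRing K m}
    (h : ∀ i, γ₁ (X i) = γ₂ (X i)) : γ₁ = γ₂ :=
  MvPowerSeries.algHom_ext_of_isNilpotent (isNilpotent_algHom_X hm γ₁) h

end Jets

section Actions

variable {K : Type*} [CommRing K] {d : ℕ} (a : Fin d → ℕ) (ζ : K)

theorem srcAct_C (c : K) : srcAct K a ζ (MvPowerSeries.C c) = MvPowerSeries.C c := by
  ext B
  rw [srcAct, RingHom.coe_mk, MonoidHom.coe_mk, OneHom.coe_mk, coeff_srcFun]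
  by_cases hB : B = 0 <;> simp [MvPowerSeries.coeff_C, hB]

theorem srcAct_X (i : Fin d) : srcAct K a ζ (X i) = ζ ^ a i • X i := by
  ext B
  rw [srcAct, RingHom.coe_mk, MonoidHom.coe_mk, OneHom.coe_mk, coeff_srcFun,
    MvPowerSeries.coeff_smul, MvPowerSeries.coeff_X]
  by_cases hB : B = Finsupp.single i 1
  · simp [hB, Finsupp.single_apply]
  · simp [hB]

noncomputable def srcAlgHom : MvPowerSeries (Fin d) K →ₐ[K] MvPowerSeries (Fin d) K :=
  { srcAct K a ζ with commutes' := srcAct_C a ζ }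

theorem tgtAct_mk {m : ℕ} (f : PowerSeries K) :
    tgtAct K m ζ (Ideal.Quotient.mk (jetIdeal K m) f) =
      Ideal.Quotient.mk (jetIdeal K m) (PowerSeries.rescale ζ f) :=
  Ideal.Quotient.lift_mk _ _ _

noncomputable def tgtAlgHom (m : ℕ) : JetRing K m →ₐ[K] JetRing K m :=
  { tgtAct K m ζ with
    commutes' := fun c => by
      simp only [RingHom.toMonoidHom_eq_coe, OneHom.toFun_eq_coe, MonoidHom.toOneHom_coe,
        MonoidHom.coe_coe, ← Ideal.Quotient.mk_algebraMap, tgtAct_mk]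
      congr 1
      ext k
      rcases k with _ | k <;> simp [PowerSeries.coeff_C] }

end Actions

section Equivariance

variable {K : Type*} [Field K] {d m : ℕ} {a : Fin d → ℕ} {ζ : K}

theorem equivJetHom_iff (hm : 0 < m) (γ : MvPowerSeries (Fin d) K →ₐ[K] JetRing K m) :
    EquivJetHom K a ζ m γ ↔ ∀ i, tgtAct K m ζ (γ (X i)) = ζ ^ a i • γ (X i) := by
  refine ⟨fun h i => by rw [← h, srcAct_X, map_smul], fun h => ?_⟩
  have hcomm : γ.comp (srcAlgHom a ζ) = (tgtAlgHom ζ m).comp γ :=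
    jetRing_algHom_ext hm fun i => (congrArg γ (srcAct_X a ζ i)).trans <| by
      rw [map_smul]
      exact (h i).symm
  exact fun f => congr($hcomm f)

end Equivariance

section TwistedSeries

variable {K : Type*} [CommRing K] {l e n : ℕ}

noncomputable def twistedSeries (l e : ℕ) {n : ℕ} (c : Fin n → K) : PowerSeries K :=
  ∑ j : Fin n, PowerSeries.C (c j) * PowerSeries.X ^ ((j : ℕ) * l + e)

theorem coeff_twistedSeries_mul_add (hl : 0 < l) (c : Fin n → K) (j : Fin n) :
    PowerSeries.coeff (j * l + e) (twistedSeries l e c) = c j := by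
  rw [twistedSeries, map_sum, Finset.sum_eq_single j]
  · simp
  · intro j' _ hj'
    rw [PowerSeries.coeff_C_mul_X_pow, if_neg]
    intro h
    exact hj' (Fin.ext (Nat.eq_of_mul_eq_mul_right hl (by omega)))
  · simp

theorem coeff_twistedSeries_eq_zero (c : Fin n → K) {k : ℕ} (hk : ∀ j : Fin n, k ≠ j * l + e) :
    PowerSeries.coeff k (twistedSeries l e c) = 0 := by
  simp [twistedSeries, hk]

theorem constantCoeff_twistedSeries (he : 1 ≤ e) (c : Fin n → K) :
    PowerSeries.constantCoeff (twistedSeries l e c) = 0 := by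
  rw [← PowerSeries.coeff_zero_eq_constantCoeff_apply]
  exact coeff_twistedSeries_eq_zero c fun j => by omega

theorem rescale_twistedSeries {ζ : K} (hζ : ζ ^ l = 1) (c : Fin n → K) :
    PowerSeries.rescale ζ (twistedSeries l e c) = ζ ^ e • twistedSeries l e c := by
  ext k
  rw [PowerSeries.coeff_rescale, PowerSeries.coeff_smul, smul_eq_mul]
  by_cases hk : ∃ j : Fin n, k = j * l + e
  · obtain ⟨j, rfl⟩ := hk
    rw [pow_add, pow_mul', hζ, one_pow, one_mul]
  · push Not at hk
    rw [coeff_twistedSeries_eq_zero c hk, mul_zero, mul_zero]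

theorem twistedSeries_succ (c : Fin (n + 1) → K) :
    twistedSeries l e c = twistedSeries l e (Fin.init c) +
      PowerSeries.C (c (Fin.last n)) * PowerSeries.X ^ (n * l + e) :=
  Fin.sum_univ_castSucc _

theorem mk_twistedSeries_injective (hl : 0 < l) (he : e ≤ l) :
    Function.Injective fun c : Fin n → K =>
      Ideal.Quotient.mk (jetIdeal K (n * l + 1)) (twistedSeries l e c) := by
  intro c c' h
  funext j
  have hj : (j : ℕ) * l + e < n * l + 1 := by nlinarith [j.isLt]
  simpa only [coeff_twistedSeries_mul_add hl] using jetIdeal_mk_eq_mk_iff.mp h _ hj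

theorem tgtAct_mk_twistedSeries {m : ℕ} {ζ : K} (hζ : ζ ^ l = 1) (c : Fin n → K) :
    tgtAct K m ζ (Ideal.Quotient.mk (jetIdeal K m) (twistedSeries l e c)) =
      ζ ^ e • Ideal.Quotient.mk (jetIdeal K m) (twistedSeries l e c) := by
  rw [tgtAct_mk, rescale_twistedSeries hζ]
  exact map_smul (Ideal.Quotient.mkₐ K (jetIdeal K m)) _ _

end TwistedSeries

theorem Nat.exists_eq_mul_add_of_mod_eq {l e n k : ℕ} (he1 : 1 ≤ e) (he : e ≤ l) (hk0 : k ≠ 0)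
    (hk : k ≤ n * l) (h : k % l = e % l) : ∃ j : Fin n, k = j * l + e := by
  have hek : e ≤ k := by
    by_contra! hke
    rw [Nat.mod_eq_of_lt (hke.trans_le he)] at h
    rcases he.lt_or_eq with he' | rfl
    · rw [Nat.mod_eq_of_lt he'] at h; omega
    · rw [Nat.mod_self] at h; omega
  obtain ⟨j, hj⟩ := Nat.dvd_of_mod_eq_zero (Nat.sub_mod_eq_zero_of_mod_eq h)
  have hkj : k = j * l + e := by rw [mul_comm] at hj; omega
  have hjn : j < n := Nat.lt_of_mul_lt_mul_right (a := l) (by omega)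
  exact ⟨⟨j, hjn⟩, hkj⟩

section TwistedJets

variable {K : Type*} [Field K] {l e n : ℕ} {ζ : K}

theorem exists_twistedSeries_of_tgtAct_eq (hl : 0 < l) (hζ : IsPrimitiveRoot ζ l) (he1 : 1 ≤ e)
    (he : e ≤ l) {f : PowerSeries K} (hf : PowerSeries.constantCoeff f = 0)
    (h : tgtAct K (n * l + 1) ζ (Ideal.Quotient.mk _ f) =
      ζ ^ e • Ideal.Quotient.mk (jetIdeal K (n * l + 1)) f) :
    ∃ c : Fin n → K, Ideal.Quotient.mk (jetIdeal K (n * l + 1)) f =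
      Ideal.Quotient.mk (jetIdeal K (n * l + 1)) (twistedSeries l e c) := by
  refine ⟨fun j => PowerSeries.coeff (j * l + e) f, jetIdeal_mk_eq_mk_iff.mpr fun k hk => ?_⟩
  by_cases hkj : ∃ j : Fin n, k = j * l + e
  · obtain ⟨j, rfl⟩ := hkj
    rw [coeff_twistedSeries_mul_add hl]
  push Not at hkj
  rw [coeff_twistedSeries_eq_zero _ hkj]
  rcases Nat.eq_zero_or_pos k with rfl | hk0
  · simpa using hf
  have hweight : ζ ^ k * PowerSeries.coeff k f = ζ ^ e * PowerSeries.coeff k f := by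
    rw [tgtAct_mk, ← Ideal.Quotient.mkₐ_eq_mk K, ← map_smul, Ideal.Quotient.mkₐ_eq_mk,
      jetIdeal_mk_eq_mk_iff] at h
    simpa [PowerSeries.coeff_rescale] using h k hk
  have hne : ζ ^ k ≠ ζ ^ e := fun hpow => by
    rw [(hζ.isOfFinOrder hl.ne').pow_inj_mod, ← hζ.eq_orderOf] at hpow
    obtain ⟨j, hj⟩ := Nat.exists_eq_mul_add_of_mod_eq (n := n) he1 he hk0.ne' (by omega) hpow
    exact hkj j hj
  exact (mul_eq_mul_right_iff.mp hweight).resolve_left hne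

end TwistedJets

section TwistedJetHom

variable {K : Type*} [Field K] {d l n : ℕ} {a : Fin d → ℕ} {ζ : K}

theorem equivJetHom_iff_exists_twistedSeries (hl : 0 < l) (hζ : IsPrimitiveRoot ζ l)
    (ha : ∀ i, 1 ≤ a i ∧ a i ≤ l) (γ : MvPowerSeries (Fin d) K →ₐ[K] JetRing K (n * l + 1)) :
    EquivJetHom K a ζ (n * l + 1) γ ↔ ∀ i, ∃ c : Fin n → K,
      γ (X i) = Ideal.Quotient.mk (jetIdeal K (n * l + 1)) (twistedSeries l (a i) c) := by
  rw [equivJetHom_iff (Nat.succ_pos _)]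
  refine forall_congr' fun i => ⟨fun h => ?_, ?_⟩
  · obtain ⟨f, hf⟩ := Ideal.Quotient.mk_surjective (γ (X i))
    rw [← hf] at h ⊢
    exact exists_twistedSeries_of_tgtAct_eq hl hζ (ha i).1 (ha i).2
      (constantCoeff_eq_zero_of_mk_eq_algHom_X (Nat.succ_pos _) γ i hf) h
  · rintro ⟨c, hc⟩
    rw [hc]
    exact tgtAct_mk_twistedSeries hζ.pow_eq_one c

variable (l a) in
noncomputable def twistedJetHom (ha : ∀ i, 1 ≤ a i) (c : Fin d → Fin n → K) :
    MvPowerSeries (Fin d) K →ₐ[K] JetRing K (n * l + 1) :=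
  (Ideal.Quotient.mkₐ K _).comp <| MvPowerSeries.substAlgHom <|
    MvPowerSeries.hasSubst_of_constantCoeff_zero fun i =>
      constantCoeff_twistedSeries (l := l) (ha i) (c i)

theorem twistedJetHom_X (ha : ∀ i, 1 ≤ a i) (c : Fin d → Fin n → K) (i : Fin d) :
    twistedJetHom l a ha c (X i) =
      Ideal.Quotient.mk (jetIdeal K (n * l + 1)) (twistedSeries l (a i) (c i)) := by
  rw [twistedJetHom, AlgHom.comp_apply, MvPowerSeries.substAlgHom_X, Ideal.Quotient.mkₐ_eq_mk]

theorem equivJetHom_twistedJetHom (hζ : ζ ^ l = 1) (ha : ∀ i, 1 ≤ a i) (c : Fin d → Fin n → K) :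
    EquivJetHom K a ζ (n * l + 1) (twistedJetHom l a ha c) :=
  (equivJetHom_iff (Nat.succ_pos _) _).mpr fun i => by
    rw [twistedJetHom_X]
    exact tgtAct_mk_twistedSeries hζ (c i)

theorem twistedJetHom_injective (hl : 0 < l) (ha : ∀ i, 1 ≤ a i ∧ a i ≤ l) :
    Function.Injective (twistedJetHom (K := K) (n := n) l a fun i => (ha i).1) :=
  fun c c' h => funext fun i => mk_twistedSeries_injective hl (ha i).2 <| by
    simpa only [twistedJetHom_X] using congr($h (X i))

theorem exists_twistedJetHom_eq (hl : 0 < l) (hζ : IsPrimitiveRoot ζ l)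
    (ha : ∀ i, 1 ≤ a i ∧ a i ≤ l) {γ : MvPowerSeries (Fin d) K →ₐ[K] JetRing K (n * l + 1)}
    (hγ : EquivJetHom K a ζ (n * l + 1) γ) :
    ∃ c, twistedJetHom l a (fun i => (ha i).1) c = γ := by
  choose c hc using (equivJetHom_iff_exists_twistedSeries hl hζ ha γ).mp hγ
  exact ⟨c, jetRing_algHom_ext (Nat.succ_pos _) fun i => by rw [twistedJetHom_X, hc]⟩

noncomputable def twistedJetEquiv (hl : 0 < l) (hζ : IsPrimitiveRoot ζ l)
    (ha : ∀ i, 1 ≤ a i ∧ a i ≤ l) :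
    (Fin d → Fin n → K) ≃ {γ : MvPowerSeries (Fin d) K →ₐ[K] JetRing K (n * l + 1) //
      EquivJetHom K a ζ (n * l + 1) γ} :=
  Equiv.ofBijective
    (fun c => ⟨_, equivJetHom_twistedJetHom hζ.pow_eq_one (fun i => (ha i).1) c⟩)
    ⟨fun _ _ h => twistedJetHom_injective hl ha (congrArg Subtype.val h),
      fun γ => (exists_twistedJetHom_eq hl hζ ha γ.2).imp fun _ hc => Subtype.ext hc⟩

theorem coe_twistedJetEquiv (hl : 0 < l) (hζ : IsPrimitiveRoot ζ l) (ha : ∀ i, 1 ≤ a i ∧ a i ≤ l)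
    (c : Fin d → Fin n → K) :
    (twistedJetEquiv hl hζ ha c : MvPowerSeries (Fin d) K →ₐ[K] JetRing K (n * l + 1)) =
      twistedJetHom l a (fun i => (ha i).1) c :=
  rfl

theorem jetTrunc_comp_twistedJetHom (ha : ∀ i, 1 ≤ a i) (c : Fin d → Fin (n + 1) → K) :
    (jetTrunc K l n).comp (twistedJetHom l a ha c).toRingHom =
      (twistedJetHom l a ha fun i => Fin.init (c i)).toRingHom := by
  have hlevel : n * l + 1 ≤ (n + 1) * l + 1 := by nlinarith
  have hle : jetIdeal K ((n + 1) * l + 1) ≤ jetIdeal K (n * l + 1) :=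
    Ideal.span_singleton_le_span_singleton.mpr (pow_dvd_pow _ hlevel)
  change ((Ideal.Quotient.factorₐ K hle).comp (twistedJetHom l a ha c)).toRingHom = _
  refine congrArg _ (jetRing_algHom_ext (Nat.succ_pos _) fun i => ?_)
  rw [AlgHom.comp_apply, twistedJetHom_X, twistedJetHom_X, Ideal.Quotient.factorₐ_apply_mk,
    twistedSeries_succ, map_add, add_eq_left, Ideal.Quotient.eq_zero_iff_mem]
  exact Ideal.mul_mem_left _ _ (Ideal.mem_span_singleton.mpr (pow_dvd_pow _ (by linarith [ha i])))

end TwistedJetHom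

def initFiberEquiv {ι α : Type*} {n : ℕ} (c₀ : ι → Fin n → α) :
    {c : ι → Fin (n + 1) → α // (fun i => Fin.init (c i)) = c₀} ≃ (ι → α) where
  toFun c i := c.1 i (Fin.last n)
  invFun b := ⟨fun i => Fin.snoc (c₀ i) (b i), funext fun i => Fin.init_snoc _ _⟩
  left_inv := by
    rintro ⟨c, rfl⟩
    ext i : 2
    exact Fin.snoc_init_self (c i)
  right_inv b := by simp

/-- Let `M` be the `d`-dimensional formal affine space over a field `K`, with
the diagonal `μ_l`-action `ζ·x_i = ζ^{a_i} x_i` (`1 ≤ a_i ≤ l`).  Then the set of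
`μ_l`-equivariant `K`-algebra homomorphisms `K[[x_1,...,x_d]] → K[t]/(t^{nl+1})` (where
`ζ·t = ζt`) consists exactly of those sending each `x_i` to an element of the form
`c_0 t^{a_i} + c_1 t^{l+a_i} + ⋯ + c_{n-1} t^{(n-1)l+a_i}` with `c_j ∈ K`; in particular
this set is in bijection with `K^{nd}`, and the truncation map to
`K[t]/(t^{nl+1})`-jets (from level `n+1` to level `n`) has all fibers isomorphic
to `K^d`. -/
theorem twisted_jets_of_formal_affine_space
    (K : Type*) [Field K] (d l n : ℕ) (hl : 0 < l)
    (ζ : K) (hζ : IsPrimitiveRoot ζ l)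
    (a : Fin d → ℕ) (ha : ∀ i, 1 ≤ a i ∧ a i ≤ l) :
    ({γ : MvPowerSeries (Fin d) K →ₐ[K] JetRing K (n * l + 1) |
        EquivJetHom K a ζ (n * l + 1) γ}
      = {γ : MvPowerSeries (Fin d) K →ₐ[K] JetRing K (n * l + 1) |
          ∀ i : Fin d, ∃ c : Fin n → K,
            γ (MvPowerSeries.X i)
              = Ideal.Quotient.mk (jetIdeal K (n * l + 1))
                  (∑ j : Fin n,
                    PowerSeries.C (c j) * (PowerSeries.X : PowerSeries K) ^ ((j : ℕ) * l + a i))}) ∧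
    Nonempty
      ({γ : MvPowerSeries (Fin d) K →ₐ[K] JetRing K (n * l + 1) //
          EquivJetHom K a ζ (n * l + 1) γ} ≃ (Fin d → Fin n → K)) ∧
    (∀ γ₀ : {γ : MvPowerSeries (Fin d) K →ₐ[K] JetRing K (n * l + 1) //
        EquivJetHom K a ζ (n * l + 1) γ},
      Nonempty
        ({γ : {γ : MvPowerSeries (Fin d) K →ₐ[K] JetRing K ((n + 1) * l + 1) //
            EquivJetHom K a ζ ((n + 1) * l + 1) γ} //
            (jetTrunc K l n).comp (γ : MvPowerSeries (Fin d) K →ₐ[K]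
                JetRing K ((n + 1) * l + 1)).toRingHom
              = ((γ₀ : MvPowerSeries (Fin d) K →ₐ[K] JetRing K (n * l + 1)).toRingHom)} ≃
          (Fin d → K))) := by
  refine ⟨Set.ext fun γ => equivJetHom_iff_exists_twistedSeries hl hζ ha γ,
    ⟨(twistedJetEquiv hl hζ ha).symm⟩, fun γ₀ => ?_⟩
  obtain ⟨c₀, rfl⟩ := (twistedJetEquiv hl hζ ha).surjective γ₀
  refine ⟨(Equiv.subtypeEquiv (twistedJetEquiv hl hζ ha) fun c => ?_).symm.trans
    (initFiberEquiv c₀)⟩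
  rw [coe_twistedJetEquiv, coe_twistedJetEquiv, jetTrunc_comp_twistedJetHom,
    AlgHom.toRingHom_eq_coe, AlgHom.toRingHom_eq_coe, AlgHom.coe_ringHom_injective.eq_iff,
    (twistedJetHom_injective hl ha).eq_iff]
end

section
/- Let G ⊂ GL_d(C) be a finite subgroup containing no reflection and no nontrivial element with a fixed hyperplane, such that the quotient X = C^d/G is smooth-resolvable by f: Y → X with simple normal crossing exceptional divisor K_{Y/X} = Σ e_i E_i. Then for the motivic sum Σ_{0≠s∈(Z_{≥0})^I} {E_{I_s}°}·L^{-Σ(e_i+1)s_i}(L-1)^{#I_s}, its dimension equals d - 1 + max{-e_i : i ∈ I} = d - 1 - discrep(X), where for s with support I_s, E_J° := ∩_{i∈J}E_i \ ∪_{i∉J}E_i. -/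
/-- For a crepant-type motivic computation on a log resolution `f : Y → X` of
`X = ℂ^d/G` with SNC exceptional divisor `K_{Y/X} = Σ e_i E_i` (each `e_i > -1`), the
dimension of the motivic sum `Σ_{0≠s} {E_{I_s}°} L^{-Σ(e_i+1)s_i} (L-1)^{#I_s}` — where
each term has dimension `dim E_{I_s}° - Σ(e_i+1)s_i + #I_s` and `dim E_J° = d - #J` — is
attained and equals `d - 1 + max{-e_i} = d - 1 - discrep(X)`, with `discrep(X) = min e_i`. -/
theorem dimension_of_stringy_motivic_sum
    {ι : Type*} [Fintype ι] [Nonempty ι] (d : ℤ)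
    (e : ι → ℚ) (he : ∀ i, -1 < e i)
    (dimE : Finset ι → ℤ) (hdimE : ∀ J : Finset ι, (dimE J : ℚ) = (d : ℚ) - J.card)
    (D : (ι →₀ ℕ) → ℚ)
    (hD : ∀ s : ι →₀ ℕ,
      D s = (dimE s.support : ℚ) - (∑ i ∈ s.support, (e i + 1) * (s i : ℚ))
        + (s.support.card : ℚ)) :
    IsGreatest {q : ℚ | ∃ s : ι →₀ ℕ, s ≠ 0 ∧ q = D s}
      ((d : ℚ) - 1 + Finset.univ.sup' Finset.univ_nonempty (fun i => -(e i))) ∧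
    (d : ℚ) - 1 + Finset.univ.sup' Finset.univ_nonempty (fun i => -(e i))
      = (d : ℚ) - 1 - Finset.univ.inf' Finset.univ_nonempty e := by
  obtain ⟨i0, -, hi0⟩ := Finset.exists_mem_eq_inf' (Finset.univ_nonempty (α := ι)) e
  have hinf : ∀ i : ι, e i0 ≤ e i := fun i => hi0 ▸ Finset.inf'_le e (Finset.mem_univ i)
  have hsup : Finset.univ.sup' Finset.univ_nonempty (fun i => -(e i)) = -(e i0) := by
    apply le_antisymm
    · exact Finset.sup'_le _ _ fun i _ => neg_le_neg (hinf i)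
    · exact Finset.le_sup' (fun i => -(e i)) (Finset.mem_univ i0)
  have hDval : ∀ s : ι →₀ ℕ, D s = (d : ℚ) - ∑ i ∈ s.support, (e i + 1) * (s i : ℚ) := by
    intro s
    rw [hD s, hdimE]
    ring
  constructor
  · constructor
    · refine ⟨Finsupp.single i0 1, ?_, ?_⟩
      · simp [Finsupp.single_eq_zero]
      · rw [hDval, hsup, Finsupp.support_single_ne_zero _ one_ne_zero]
        simp
        ring
    · rintro q ⟨s, hs, rfl⟩
      rw [hDval, hsup]
      obtain ⟨j, hj⟩ := Finsupp.support_nonempty_iff.mpr hs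
      have h1 : (e j + 1) * (s j : ℚ) ≤ ∑ i ∈ s.support, (e i + 1) * (s i : ℚ) :=
        Finset.single_le_sum (f := fun i => (e i + 1) * (s i : ℚ))
          (fun i _ => mul_nonneg (by linarith [he i]) (Nat.cast_nonneg _)) hj
      have h2 : (1 : ℚ) ≤ (s j : ℚ) := by
        have := Finsupp.mem_support_iff.mp hj
        exact_mod_cast Nat.one_le_iff_ne_zero.mpr this
      have h3 : e i0 + 1 ≤ (e j + 1) * (s j : ℚ) := by
        have := hinf j
        nlinarith [he j]
      linarith
  · rw [hsup, hi0]
    ring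
end
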